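/- arXiv:2511.09121 — 4 statements merged into one kernel-verified Lean document; each statement's English description precedes it below -/
import Mathlib

section
/- Let k ∈ [0,1) and define f₀(z) = z/(1−kz²). Then for every z ∈ 𝔻 one has (1−|z|²)² |S_{f₀}(z)| ≤ 6k, with equality at z = 0; consequently the Schwarzian norm ‖S_{f₀}‖ = sup_{z∈𝔻} (1−|z|²)² |S_{f₀}(z)| equals 6k. -/
/-- The Schwarzian derivative `S_f = (f''/f')' - (1/2)(f''/f')²`. -/
noncomputable def schwarzian (f : ℂ → ℂ) (z : ℂ) : ℂ :=
  deriv (fun w => deriv (deriv f) w / deriv f w) z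
    - (1 / 2) * (deriv (deriv f) z / deriv f z) ^ 2

/-! With `f₀' = (1 + kz²)/(1 - kz²)²` and `f₀'' = 2kz(3 + kz²)/(1 - kz²)³`, the classical form
`S_f = f'''/f' - (3/2)(f''/f')²` of the Schwarzian collapses to `S_{f₀}(z) = 6k/(1 + kz²)²`.
Since `|1 + kz²| ≥ 1 - k|z|² ≥ 1 - |z|²`, the weighted quantity `(1 - |z|²)² |S_{f₀}(z)|` is at most
`6k`, and it equals `6k` at `z = 0`. -/

open Filter Topology

theorem schwarzian_eq_of_hasDerivAt {f f₁ f₂ : ℂ → ℂ} {z f₃ : ℂ}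
    (h₁ : ∀ᶠ w in 𝓝 z, HasDerivAt f (f₁ w) w) (h₂ : ∀ᶠ w in 𝓝 z, HasDerivAt f₁ (f₂ w) w)
    (h₃ : HasDerivAt f₂ f₃ z) (hz : f₁ z ≠ 0) :
    schwarzian f z = f₃ / f₁ z - 3 / 2 * (f₂ z / f₁ z) ^ 2 := by
  have hderiv : deriv f =ᶠ[𝓝 z] f₁ := h₁.mono fun w hw => hw.deriv
  have hderiv₂ : deriv (deriv f) =ᶠ[𝓝 z] f₂ := by
    filter_upwards [hderiv.eventuallyEq_nhds, h₂] with w hw hw₂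
    rw [hw.deriv_eq, hw₂.deriv]
  have hquot : (fun w => deriv (deriv f) w / deriv f w) =ᶠ[𝓝 z] fun w => f₂ w / f₁ w :=
    hderiv₂.div hderiv
  rw [schwarzian, hquot.deriv_eq, hquot.eq_of_nhds,
    (h₃.fun_div h₂.self_of_nhds hz).deriv]
  field_simp
  ring

section ComplexParameter

variable {c z : ℂ}

theorem hasDerivAt_div_one_sub_mul_sq_pow {p : ℂ → ℂ} {p' : ℂ} (n : ℕ)
    (hp : HasDerivAt p p' z) (hz : 1 - c * z ^ 2 ≠ 0) :
    HasDerivAt (fun w => p w / (1 - c * w ^ 2) ^ n)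
      ((p' * (1 - c * z ^ 2) + 2 * n * c * z * p z) / (1 - c * z ^ 2) ^ (n + 1)) z := by
  have hq : HasDerivAt (fun w => 1 - c * w ^ 2) (-(2 * c * z)) z := by
    simpa [mul_comm, mul_left_comm] using ((hasDerivAt_pow 2 z).const_mul c).const_sub 1
  refine (hp.fun_div (hq.fun_pow n) (pow_ne_zero n hz)).congr_deriv ?_
  rcases n with _ | n
  · simp [mul_div_assoc, div_self hz]
  · field_simp; push_cast; ring

theorem hasDerivAt_div_one_sub_mul_sq (hz : 1 - c * z ^ 2 ≠ 0) :
    HasDerivAt (fun w => w / (1 - c * w ^ 2)) ((1 + c * z ^ 2) / (1 - c * z ^ 2) ^ 2) z := by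
  convert hasDerivAt_div_one_sub_mul_sq_pow 1 (hasDerivAt_id z) hz using 1
  · simp
  · simp only [id]; push_cast; ring

theorem hasDerivAt_deriv_div_one_sub_mul_sq (hz : 1 - c * z ^ 2 ≠ 0) :
    HasDerivAt (fun w => (1 + c * w ^ 2) / (1 - c * w ^ 2) ^ 2)
      (2 * c * z * (3 + c * z ^ 2) / (1 - c * z ^ 2) ^ 3) z := by
  have hp : HasDerivAt (fun w => 1 + c * w ^ 2) (2 * c * z) z := by
    simpa [mul_comm, mul_left_comm] using ((hasDerivAt_pow 2 z).const_mul c).const_add 1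
  convert hasDerivAt_div_one_sub_mul_sq_pow 2 hp hz using 2
  push_cast; ring

theorem hasDerivAt_deriv2_div_one_sub_mul_sq (hz : 1 - c * z ^ 2 ≠ 0) :
    HasDerivAt (fun w => 2 * c * w * (3 + c * w ^ 2) / (1 - c * w ^ 2) ^ 3)
      (6 * c * (1 + 6 * c * z ^ 2 + c ^ 2 * z ^ 4) / (1 - c * z ^ 2) ^ 4) z := by
  have hp : HasDerivAt (fun w => 2 * c * w * (3 + c * w ^ 2)) (6 * c * (1 + c * z ^ 2)) z := by
    have hpoly : (fun w => 2 * c * w * (3 + c * w ^ 2)) = fun w => 6 * c * w + 2 * c ^ 2 * w ^ 3 := by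
      ext w; ring
    rw [hpoly]
    refine (((hasDerivAt_id' z).const_mul (6 * c)).fun_add
      ((hasDerivAt_pow 3 z).const_mul (2 * c ^ 2))).congr_deriv ?_
    push_cast; ring
  convert hasDerivAt_div_one_sub_mul_sq_pow 3 hp hz using 2
  push_cast; ring

theorem schwarzian_div_one_sub_mul_sq (hsub : 1 - c * z ^ 2 ≠ 0) (hadd : 1 + c * z ^ 2 ≠ 0) :
    schwarzian (fun w => w / (1 - c * w ^ 2)) z = 6 * c / (1 + c * z ^ 2) ^ 2 := by
  have hnear : ∀ᶠ w in 𝓝 z, 1 - c * w ^ 2 ≠ 0 :=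
    (by fun_prop : Continuous fun w => 1 - c * w ^ 2).continuousAt.eventually_ne hsub
  rw [schwarzian_eq_of_hasDerivAt (hnear.mono fun _ => hasDerivAt_div_one_sub_mul_sq)
    (hnear.mono fun _ => hasDerivAt_deriv_div_one_sub_mul_sq)
    (hasDerivAt_deriv2_div_one_sub_mul_sq hsub) (div_ne_zero hadd (pow_ne_zero 2 hsub))]
  field_simp
  -- with `u = cz²`: `(1 + 6u + u²)(1 + u) - u(3 + u)² = (1 - u)²`
  ring

end ComplexParameter

section RealParameter

variable {k : ℝ} {z : ℂ}

theorem norm_ofReal_mul_sq_le (hk0 : 0 ≤ k) (hk1 : k ≤ 1) : ‖(k : ℂ) * z ^ 2‖ ≤ ‖z‖ ^ 2 := by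
  rw [norm_mul, norm_pow, Complex.norm_real, Real.norm_of_nonneg hk0]
  exact mul_le_of_le_one_left (by positivity) hk1

theorem one_sub_norm_sq_le_norm_one_add_ofReal_mul_sq (hk0 : 0 ≤ k) (hk1 : k ≤ 1) :
    1 - ‖z‖ ^ 2 ≤ ‖1 + (k : ℂ) * z ^ 2‖ := by
  have := norm_sub_norm_le (1 : ℂ) (-((k : ℂ) * z ^ 2))
  rw [sub_neg_eq_add, norm_neg, norm_one] at this
  linarith [norm_ofReal_mul_sq_le (z := z) hk0 hk1]

theorem schwarzian_div_one_sub_ofReal_mul_sq (hk0 : 0 ≤ k) (hk1 : k ≤ 1) (hz : ‖z‖ < 1) :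
    schwarzian (fun w => w / (1 - (k : ℂ) * w ^ 2)) z = 6 * k / (1 + (k : ℂ) * z ^ 2) ^ 2 := by
  have hsmall : ‖(k : ℂ) * z ^ 2‖ < 1 := by
    have := norm_ofReal_mul_sq_le (z := z) hk0 hk1
    nlinarith [norm_nonneg z]
  refine schwarzian_div_one_sub_mul_sq (sub_ne_zero.2 fun h => ?_) fun h => ?_
  · simp [← h] at hsmall
  · simp [eq_neg_of_add_eq_zero_right h] at hsmall

theorem sq_one_sub_norm_sq_mul_norm_schwarzian_le (hk0 : 0 ≤ k) (hk1 : k ≤ 1) (hz : ‖z‖ < 1) :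
    (1 - ‖z‖ ^ 2) ^ 2 * ‖schwarzian (fun w => w / (1 - (k : ℂ) * w ^ 2)) z‖ ≤ 6 * k := by
  have hpos : 0 < 1 - ‖z‖ ^ 2 := sub_pos.2 (pow_lt_one₀ (norm_nonneg z) hz two_ne_zero)
  have hle := one_sub_norm_sq_le_norm_one_add_ofReal_mul_sq (z := z) hk0 hk1
  have hnorm : ‖6 * (k : ℂ)‖ = 6 * k := by
    rw [norm_mul, Complex.norm_real, Real.norm_of_nonneg hk0]; norm_num
  rw [schwarzian_div_one_sub_ofReal_mul_sq hk0 hk1 hz, norm_div, norm_pow, hnorm, mul_div_assoc',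
    div_le_iff₀ (pow_pos (hpos.trans_le hle) 2), mul_comm]
  gcongr

end RealParameter

/-- For `f₀(z) = z/(1-kz²)` with `0 ≤ k < 1`, `(1-|z|²)² |S_{f₀}(z)| ≤ 6k` on `𝔻`,
with equality at `z = 0`; hence the Schwarzian norm of `f₀` equals `6k`. -/
theorem schwarzian_norm_of_extremal_function
    (k : ℝ) (hk0 : 0 ≤ k) (hk1 : k < 1) :
    (∀ z : ℂ, ‖z‖ < 1 →
      (1 - ‖z‖ ^ 2) ^ 2 * ‖schwarzian (fun z : ℂ => z / (1 - (k : ℂ) * z ^ 2)) z‖ ≤ 6 * k) ∧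
    (1 - ‖(0 : ℂ)‖ ^ 2) ^ 2 * ‖schwarzian (fun z : ℂ => z / (1 - (k : ℂ) * z ^ 2)) 0‖ = 6 * k ∧
    (⨆ z : Metric.ball (0 : ℂ) 1,
        (1 - ‖(z : ℂ)‖ ^ 2) ^ 2 *
          ‖schwarzian (fun z : ℂ => z / (1 - (k : ℂ) * z ^ 2)) (z : ℂ)‖) = 6 * k := by
  have hbound := fun z (hz : ‖z‖ < 1) => sq_one_sub_norm_sq_mul_norm_schwarzian_le hk0 hk1.le hz
  have hzero : (1 - ‖(0 : ℂ)‖ ^ 2) ^ 2 *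
      ‖schwarzian (fun z : ℂ => z / (1 - (k : ℂ) * z ^ 2)) 0‖ = 6 * k := by
    rw [schwarzian_div_one_sub_ofReal_mul_sq hk0 hk1.le (by simp)]
    simp [abs_of_nonneg hk0]
  refine ⟨hbound, hzero, le_antisymm ?_ ?_⟩
  · exact Real.iSup_le (fun z => hbound z (mem_ball_zero_iff.1 z.2)) (by positivity)
  · rw [← hzero]
    exact le_ciSup (f := fun z : Metric.ball (0 : ℂ) 1 => _)
      ⟨6 * k, Set.forall_mem_range.2 fun z => hbound z (mem_ball_zero_iff.1 z.2)⟩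
      ⟨0, Metric.mem_ball_self one_pos⟩
end

section
/- Let Ω ⊆ ℂ be open and convex, let h, g, η : ℂ → ℂ be complex-differentiable on Ω, let K > 0 satisfy |η(z₂) − η(z₁)| ≥ K|z₂ − z₁| for all z₁, z₂ ∈ Ω, and let k ∈ [0,1) satisfy |h′(z) − η′(z)| + |g′(z)| ≤ kK for all z ∈ Ω. Then |g′(z)| ≤ k·|h′(z)| for all z ∈ Ω (and in particular h′(z) ≠ 0 on Ω). -/
/-- Dilatation bound: under the hypotheses of the quasiconformal-extension criterion,
the second complex dilatation satisfies `|g'| ≤ k|h'|` on `Ω` (in particular `h' ≠ 0`). -/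
theorem dilatation_bound
    (Ω : Set ℂ) (hΩopen : IsOpen Ω) (hΩconv : Convex ℝ Ω)
    (h g η : ℂ → ℂ)
    (hh : ∀ z ∈ Ω, DifferentiableAt ℂ h z)
    (hg : ∀ z ∈ Ω, DifferentiableAt ℂ g z)
    (hη : ∀ z ∈ Ω, DifferentiableAt ℂ η z)
    (K : ℝ) (hK : 0 < K)
    (hco : ∀ z₁ ∈ Ω, ∀ z₂ ∈ Ω, K * ‖z₂ - z₁‖ ≤ ‖η z₂ - η z₁‖)
    (k : ℝ) (hk0 : 0 ≤ k) (hk1 : k < 1)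
    (hbd : ∀ z ∈ Ω, ‖deriv h z - deriv η z‖ + ‖deriv g z‖ ≤ k * K) :
    ∀ z ∈ Ω, ‖deriv g z‖ ≤ k * ‖deriv h z‖ ∧ deriv h z ≠ 0 := by
  intro z hz
  -- Step 1: ‖deriv η z‖ ≥ K
  have hηK : K ≤ ‖deriv η z‖ := by
    have hd : HasDerivAt η (deriv η z) z := (hη z hz).hasDerivAt
    have hslope := hasDerivAt_iff_tendsto_slope.mp hd
    have htn : Filter.Tendsto (fun y => ‖slope η z y‖) (nhdsWithin z {z}ᶜ)
        (nhds ‖deriv η z‖) := hslope.norm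
    refine ge_of_tendsto htn ?_
    have hmem : Ω ∩ {z}ᶜ ∈ nhdsWithin z {z}ᶜ := by
      exact Filter.inter_mem (mem_nhdsWithin_of_mem_nhds (hΩopen.mem_nhds hz))
        self_mem_nhdsWithin
    filter_upwards [hmem] with y hy
    obtain ⟨hyΩ, hyz⟩ := hy
    have hyz' : y - z ≠ 0 := sub_ne_zero.mpr hyz
    have : K * ‖y - z‖ ≤ ‖η y - η z‖ := hco z hz y hyΩ
    rw [slope_def_field, norm_div,
      le_div_iff₀ (by simpa using norm_pos_iff.mpr hyz' : (0:ℝ) < ‖y - z‖)]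
    linarith [this]
  -- Step 2: ‖deriv h z‖ ≥ K - ‖deriv h z - deriv η z‖
  have htri : ‖deriv η z‖ - ‖deriv h z - deriv η z‖ ≤ ‖deriv h z‖ := by
    have := norm_sub_norm_le (deriv η z) (deriv h z)
    have h2 : ‖deriv η z - deriv h z‖ = ‖deriv h z - deriv η z‖ := norm_sub_rev _ _
    linarith
  have hb := hbd z hz
  have hgz : 0 ≤ ‖deriv g z‖ := norm_nonneg _
  have hhd : 0 ≤ ‖deriv h z - deriv η z‖ := norm_nonneg _
  have hmain : ‖deriv g z‖ ≤ k * ‖deriv h z‖ := by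
    have h1 : K - ‖deriv h z - deriv η z‖ ≤ ‖deriv h z‖ := by linarith
    have h2 : k * (K - ‖deriv h z - deriv η z‖) ≤ k * ‖deriv h z‖ :=
      mul_le_mul_of_nonneg_left h1 hk0
    nlinarith
  refine ⟨hmain, ?_⟩
  have hpos : 0 < ‖deriv h z‖ := by nlinarith
  exact fun hc => by simp [hc] at hpos
end

section
/- Let Ω ⊆ ℂ be open and convex, let h, g, η : ℂ → ℂ be complex-differentiable on Ω, let K > 0 satisfy |η(z₂) − η(z₁)| ≥ K|z₂ − z₁| for all z₁, z₂ ∈ Ω, and let k ∈ [0,1) satisfy |h′(z) − η′(z)| + |g′(z)| ≤ kK for all z ∈ Ω. Define f(z) = h(z) + conj(g(z)). Then |f(z₂) − f(z₁)| ≥ (1−k)·K·|z₂ − z₁| for all z₁, z₂ ∈ Ω. -/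
open Complex ComplexConjugate

theorem hasFDerivAt_add_conj {p q : ℂ → ℂ} {a b z : ℂ} (hp : HasDerivAt p a z)
    (hq : HasDerivAt q b z) :
    HasFDerivAt (fun w => p w + conj (q w))
      (a • (1 : ℂ →L[ℝ] ℂ) + conj b • (conjCLE : ℂ →L[ℝ] ℂ)) z := by
  have hp' : HasFDerivAt p (a • (1 : ℂ →L[ℝ] ℂ)) z :=
    (hp.hasFDerivAt.restrictScalars ℝ).congr_fderiv (by ext w; simp [mul_comm])
  have hq' : HasFDerivAt (fun w => conj (q w)) (conj b • (conjCLE : ℂ →L[ℝ] ℂ)) z :=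
    ((conjCLE : ℂ →L[ℝ] ℂ).hasFDerivAt.comp z (hq.hasFDerivAt.restrictScalars ℝ)).congr_fderiv
      (by ext w; simp [mul_comm])
  exact hp'.add hq'

theorem norm_smul_one_add_smul_conjCLE_le (a c : ℂ) :
    ‖a • (1 : ℂ →L[ℝ] ℂ) + c • (conjCLE : ℂ →L[ℝ] ℂ)‖ ≤ ‖a‖ + ‖c‖ :=
  calc ‖a • (1 : ℂ →L[ℝ] ℂ) + c • (conjCLE : ℂ →L[ℝ] ℂ)‖
      ≤ ‖a‖ * ‖(1 : ℂ →L[ℝ] ℂ)‖ + ‖c‖ * ‖(conjCLE : ℂ →L[ℝ] ℂ)‖ :=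
        (norm_add_le _ _).trans <| add_le_add
          (ContinuousLinearMap.opNorm_smul_le _ _) (ContinuousLinearMap.opNorm_smul_le _ _)
    _ ≤ ‖a‖ + ‖c‖ := by
        rw [conjCLE_norm, mul_one]
        gcongr
        exact mul_le_of_le_one_right (norm_nonneg a) ContinuousLinearMap.norm_id_le

theorem Convex.norm_add_conj_sub_le {s : Set ℂ} (hs : Convex ℝ s) {p q : ℂ → ℂ} {C : ℝ}
    (hp : ∀ z ∈ s, DifferentiableAt ℂ p z) (hq : ∀ z ∈ s, DifferentiableAt ℂ q z)
    (hC : ∀ z ∈ s, ‖deriv p z‖ + ‖deriv q z‖ ≤ C) {z₁ z₂ : ℂ} (hz₁ : z₁ ∈ s) (hz₂ : z₂ ∈ s) :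
    ‖(p z₂ + conj (q z₂)) - (p z₁ + conj (q z₁))‖ ≤ C * ‖z₂ - z₁‖ :=
  hs.norm_image_sub_le_of_norm_hasFDerivWithin_le
    (fun z hz => (hasFDerivAt_add_conj (hp z hz).hasDerivAt (hq z hz).hasDerivAt).hasFDerivWithinAt)
    (fun z hz => (norm_smul_one_add_smul_conjCLE_le _ _).trans (by rw [norm_conj]; exact hC z hz))
    hz₁ hz₂

theorem harmonic_coLipschitz_bound_general
    (Ω : Set ℂ) (hΩconv : Convex ℝ Ω)
    (h g η : ℂ → ℂ)
    (hh : ∀ z ∈ Ω, DifferentiableAt ℂ h z)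
    (hg : ∀ z ∈ Ω, DifferentiableAt ℂ g z)
    (hη : ∀ z ∈ Ω, DifferentiableAt ℂ η z)
    (K : ℝ)
    (hco : ∀ z₁ ∈ Ω, ∀ z₂ ∈ Ω, K * ‖z₂ - z₁‖ ≤ ‖η z₂ - η z₁‖)
    (k : ℝ)
    (hbd : ∀ z ∈ Ω, ‖deriv h z - deriv η z‖ + ‖deriv g z‖ ≤ k * K) :
    ∀ z₁ ∈ Ω, ∀ z₂ ∈ Ω,
      (1 - k) * K * ‖z₂ - z₁‖
        ≤ ‖(h z₂ + (starRingEnd ℂ) (g z₂)) - (h z₁ + (starRingEnd ℂ) (g z₁))‖ := by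
  intro z₁ hz₁ z₂ hz₂
  -- `h - η + conj ∘ g` is `kK`-Lipschitz and differs from `f` by `η`.
  have hφ := hΩconv.norm_add_conj_sub_le (p := h - η) (fun z hz => (hh z hz).sub (hη z hz)) hg
    (fun z hz => by rw [deriv_sub (hh z hz) (hη z hz)]; exact hbd z hz) hz₁ hz₂
  have htri : ‖η z₂ - η z₁‖ ≤ ‖(h z₂ + conj (g z₂)) - (h z₁ + conj (g z₁))‖
      + ‖((h - η) z₂ + conj (g z₂)) - ((h - η) z₁ + conj (g z₁))‖ := by
    refine le_of_eq_of_le ?_ (norm_sub_le _ _)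
    congr 1
    simp only [Pi.sub_apply]
    ring
  linarith [hco z₁ hz₁ z₂ hz₂]

/-- Lower (co-Lipschitz) bound for the harmonic mapping `f = h + conj ∘ g`:
`|f(z₂) - f(z₁)| ≥ (1-k)K|z₂ - z₁|` on the convex domain `Ω`. -/
theorem harmonic_coLipschitz_bound
    (Ω : Set ℂ) (hΩopen : IsOpen Ω) (hΩconv : Convex ℝ Ω)
    (h g η : ℂ → ℂ)
    (hh : ∀ z ∈ Ω, DifferentiableAt ℂ h z)
    (hg : ∀ z ∈ Ω, DifferentiableAt ℂ g z)
    (hη : ∀ z ∈ Ω, DifferentiableAt ℂ η z)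
    (K : ℝ) (hK : 0 < K)
    (hco : ∀ z₁ ∈ Ω, ∀ z₂ ∈ Ω, K * ‖z₂ - z₁‖ ≤ ‖η z₂ - η z₁‖)
    (k : ℝ) (hk0 : 0 ≤ k) (hk1 : k < 1)
    (hbd : ∀ z ∈ Ω, ‖deriv h z - deriv η z‖ + ‖deriv g z‖ ≤ k * K) :
    ∀ z₁ ∈ Ω, ∀ z₂ ∈ Ω,
      (1 - k) * K * ‖z₂ - z₁‖
        ≤ ‖(h z₂ + (starRingEnd ℂ) (g z₂)) - (h z₁ + (starRingEnd ℂ) (g z₁))‖ :=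
  harmonic_coLipschitz_bound_general Ω hΩconv h g η hh hg hη K hco k hbd
end

section
/- Let Ω ⊆ ℂ be open and convex, let h, g, η : ℂ → ℂ be complex-differentiable on Ω, let K > 0 satisfy |η(z₂) − η(z₁)| ≥ K|z₂ − z₁| for all z₁, z₂ ∈ Ω, and let k ∈ [0,1) satisfy |h′(z) − η′(z)| + |g′(z)| ≤ kK for all z ∈ Ω. Define f(z) = h(z) + conj(g(z)). Then f is injective on Ω. -/
/-- Injectivity of the harmonic mapping `f = h + conj ∘ g` on the convex domain `Ω`
under the quasiconformal-extension criterion hypotheses. -/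
theorem harmonic_injective
    (Ω : Set ℂ) (hΩopen : IsOpen Ω) (hΩconv : Convex ℝ Ω)
    (h g η : ℂ → ℂ)
    (hh : ∀ z ∈ Ω, DifferentiableAt ℂ h z)
    (hg : ∀ z ∈ Ω, DifferentiableAt ℂ g z)
    (hη : ∀ z ∈ Ω, DifferentiableAt ℂ η z)
    (K : ℝ) (hK : 0 < K)
    (hco : ∀ z₁ ∈ Ω, ∀ z₂ ∈ Ω, K * ‖z₂ - z₁‖ ≤ ‖η z₂ - η z₁‖)
    (k : ℝ) (hk0 : 0 ≤ k) (hk1 : k < 1)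
    (hbd : ∀ z ∈ Ω, ‖deriv h z - deriv η z‖ + ‖deriv g z‖ ≤ k * K) :
    Set.InjOn (fun z : ℂ => h z + (starRingEnd ℂ) (g z)) Ω := by
  -- Auxiliary map F = (h - η) + conj ∘ g, with real Fréchet derivative of norm ≤ k*K.
  set F : ℂ → ℂ := fun z => h z - η z + (starRingEnd ℂ) (g z) with hF
  set F' : ℂ → (ℂ →L[ℝ] ℂ) := fun z =>
    (((1 : ℂ →L[ℂ] ℂ).smulRight (deriv h z - deriv η z)).restrictScalars ℝ) +
      ((LinearIsometryEquiv.toLinearIsometry Complex.conjLIE).toContinuousLinearMap.comp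
        (((1 : ℂ →L[ℂ] ℂ).smulRight (deriv g z)).restrictScalars ℝ)) with hF'
  have hderiv : ∀ z ∈ Ω, HasFDerivWithinAt F (F' z) Ω z := by
    intro z hz
    have h1 : HasDerivAt (fun w => h w - η w) (deriv h z - deriv η z) z :=
      ((hh z hz).hasDerivAt.sub (hη z hz).hasDerivAt)
    have h2 : HasDerivAt g (deriv g z) z := (hg z hz).hasDerivAt
    have h1' : HasFDerivAt (fun w => h w - η w)
        ((((1 : ℂ →L[ℂ] ℂ).smulRight (deriv h z - deriv η z)).restrictScalars ℝ)) z :=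
      (hasDerivAt_iff_hasFDerivAt.1 h1).restrictScalars ℝ
    have h2' : HasFDerivAt g
        ((((1 : ℂ →L[ℂ] ℂ).smulRight (deriv g z)).restrictScalars ℝ)) z :=
      (hasDerivAt_iff_hasFDerivAt.1 h2).restrictScalars ℝ
    have h3 : HasFDerivAt (fun w => (starRingEnd ℂ) (g w))
        ((LinearIsometryEquiv.toLinearIsometry Complex.conjLIE).toContinuousLinearMap.comp
          (((1 : ℂ →L[ℂ] ℂ).smulRight (deriv g z)).restrictScalars ℝ)) z := by
      have := ((LinearIsometryEquiv.toLinearIsometry Complex.conjLIE).toContinuousLinearMap.hasFDerivAt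
        (x := g z)).comp z h2'
      exact this
    exact ((h1'.add h3).hasFDerivWithinAt)
  have hnorm : ∀ z ∈ Ω, ‖F' z‖ ≤ k * K := by
    intro z hz
    refine le_trans (norm_add_le _ _) ?_
    have e1 : ‖(((1 : ℂ →L[ℂ] ℂ).smulRight (deriv h z - deriv η z)).restrictScalars ℝ)‖
        = ‖deriv h z - deriv η z‖ := by
      rw [ContinuousLinearMap.norm_restrictScalars,
        ContinuousLinearMap.norm_smulRight_apply, norm_one, one_mul]
    have e2 : ‖((LinearIsometryEquiv.toLinearIsometry Complex.conjLIE).toContinuousLinearMap.comp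
        (((1 : ℂ →L[ℂ] ℂ).smulRight (deriv g z)).restrictScalars ℝ))‖ = ‖deriv g z‖ := by
      rw [LinearIsometry.norm_toContinuousLinearMap_comp,
        ContinuousLinearMap.norm_restrictScalars,
        ContinuousLinearMap.norm_smulRight_apply, norm_one, one_mul]
    rw [e1, e2]; exact hbd z hz
  have hlip : ∀ z₁ ∈ Ω, ∀ z₂ ∈ Ω, ‖F z₂ - F z₁‖ ≤ k * K * ‖z₂ - z₁‖ :=
    fun z₁ h1 z₂ h2 => hΩconv.norm_image_sub_le_of_norm_hasFDerivWithin_le hderiv hnorm h1 h2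
  intro z₁ h1 z₂ h2 hfe
  by_contra hne
  have hΔ : (0:ℝ) < ‖z₂ - z₁‖ := by
    simpa [sub_eq_zero] using (norm_pos_iff.2 (sub_ne_zero.2 (Ne.symm hne)))
  have key : η z₂ - η z₁ = -(F z₂ - F z₁) := by
    have : h z₁ + (starRingEnd ℂ) (g z₁) = h z₂ + (starRingEnd ℂ) (g z₂) := hfe
    simp only [hF]
    linear_combination -this
  have : K * ‖z₂ - z₁‖ ≤ k * K * ‖z₂ - z₁‖ := by
    calc K * ‖z₂ - z₁‖ ≤ ‖η z₂ - η z₁‖ := hco z₁ h1 z₂ h2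
      _ = ‖F z₂ - F z₁‖ := by rw [key, norm_neg]
      _ ≤ k * K * ‖z₂ - z₁‖ := hlip z₁ h1 z₂ h2
  nlinarith [mul_pos (mul_pos (sub_pos.2 hk1) hK) hΔ]
end
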